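/- arXiv:0812.3055 — 3 statements merged into one kernel-verified Lean document; each statement's English description precedes it below -/
import Mathlib

section
/- Let (ε_k)_{k∈ℕ} be a sequence of i.i.d. random variables with values in ℝ^d and let F : ℝ^d × [0,1] → ℝ be measurable such that sup_{t∈[0,1]} E|F(ε₁,t)| < ∞, lim_{M→∞} sup_{t∈[0,1]} E[|F(ε₁,t)| · 1_{|F(ε₁,t)|>M}] = 0, and t ↦ E F(ε₁,t) is Riemann-integrable on [0,1]. Then (1/n) ∑_{k=1}^n F(ε_k, k/n) converges in probability to ∫₀¹ E F(ε₁,t) dt as n → ∞. -/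
open MeasureTheory ProbabilityTheory Filter
open scoped BigOperators Topology

/-!
Truncate every summand at a level `M` supplied by the uniform integrability. The truncated
summands are bounded by `|M|` and pairwise independent, so by Cauchy–Schwarz the `L¹` norm of
their centred average is at most `√(variance)/n ≤ |M|/√n`; the tails contribute at most `2δ`
in `L¹`, uniformly in `n`. Hence the centred averages tend to `0` in `L¹`. By identical
distribution the means are the Riemann sums of `t ↦ E F(ε₁,t)`, and `L¹` convergence implies
convergence in probability.
-/

lemma setIntegral_lt_abs_eq_integral_indicator {α : Type*} [MeasurableSpace α] {μ : Measure α}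
    {f : α → ℝ} (hf : AEMeasurable f μ) (M : ℝ) :
    ∫ x in {x | M < |f x|}, |f x| ∂μ = ∫ x, {y : ℝ | M < |y|}.indicator abs (f x) ∂μ := by
  have hs : MeasurableSet {y : ℝ | M < |y|} := measurableSet_lt measurable_const measurable_abs
  change ∫ x in f ⁻¹' {y | M < |y|}, |f x| ∂μ = _
  rw [← integral_indicator₀ (hf.nullMeasurable hs)]
  rfl

lemma abs_sub_indicator_eq_indicator_abs (M y : ℝ) :
    |y - {y : ℝ | |y| ≤ M}.indicator id y| = {y : ℝ | M < |y|}.indicator abs y := by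
  by_cases hy : |y| ≤ M
  · simp [hy, not_lt.2 hy]
  · simp [hy, not_le.1 hy]

lemma abs_indicator_id_le_abs (M y : ℝ) : |{y : ℝ | |y| ≤ M}.indicator id y| ≤ |M| := by
  by_cases hy : |y| ≤ M
  · simpa [hy] using hy.trans (le_abs_self M)
  · simp [hy]

lemma integral_abs_add_le {α : Type*} [MeasurableSpace α] {μ : Measure α} {f g : α → ℝ}
    (hf : Integrable f μ) (hg : Integrable g μ) :
    ∫ x, |f x + g x| ∂μ ≤ ∫ x, |f x| ∂μ + ∫ x, |g x| ∂μ := by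
  rw [← integral_add hf.abs hg.abs]
  exact integral_mono (hf.add hg).abs (hf.abs.add hg.abs) fun x => abs_add_le _ _

lemma ProbabilityTheory.IdentDistrib.setIntegral_lt_abs_eq {α β : Type*} [MeasurableSpace α]
    [MeasurableSpace β] {μ : Measure α} {ν : Measure β} {f : α → ℝ} {g : β → ℝ}
    (h : IdentDistrib f g μ ν) (M : ℝ) :
    ∫ x in {x | M < |f x|}, |f x| ∂μ = ∫ x in {x | M < |g x|}, |g x| ∂ν := by
  rw [setIntegral_lt_abs_eq_integral_indicator h.aemeasurable_fst,
    setIntegral_lt_abs_eq_integral_indicator h.aemeasurable_snd]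
  exact (h.comp (measurable_abs.indicator
    (measurableSet_lt measurable_const measurable_abs))).integral_eq

section

variable {Ω : Type*} [MeasurableSpace Ω] {P : Measure Ω} [IsProbabilityMeasure P]

lemma integral_abs_sub_integral_le_sqrt_variance {X : Ω → ℝ} (hX : MemLp X 2 P) :
    ∫ ω, |X ω - ∫ ω', X ω' ∂P| ∂P ≤ √(variance X P) := by
  set Z : Ω → ℝ := fun ω => |X ω - ∫ ω', X ω' ∂P|
  have hZ : MemLp Z 2 P := (hX.sub (memLp_const _)).abs
  have hvar : 0 ≤ variance Z P := variance_nonneg Z P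
  rw [variance_eq_sub hZ] at hvar
  refine Real.le_sqrt_of_sq_le ?_
  calc (∫ ω, Z ω ∂P) ^ 2 ≤ ∫ ω, (Z ^ 2) ω ∂P := by linarith
    _ = variance X P := by
      rw [variance_eq_integral hX.aemeasurable]
      simp only [Z, Pi.pow_apply, sq_abs]

lemma integral_abs_sum_sub_integral_le_two_mul {ι : Type*} {s : Finset ι} {T : ι → Ω → ℝ}
    (hT : ∀ i ∈ s, Integrable (T i) P) :
    ∫ ω, |∑ i ∈ s, T i ω - ∑ i ∈ s, ∫ ω', T i ω' ∂P| ∂P ≤ 2 * ∑ i ∈ s, ∫ ω, |T i ω| ∂P := by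
  have hsum_abs : Integrable (fun ω => ∑ i ∈ s, |T i ω|) P :=
    integrable_finsetSum s fun i hi => (hT i hi).abs
  calc ∫ ω, |∑ i ∈ s, T i ω - ∑ i ∈ s, ∫ ω', T i ω' ∂P| ∂P
      ≤ ∫ ω, (∑ i ∈ s, |T i ω| + ∑ i ∈ s, ∫ ω', |T i ω'| ∂P) ∂P := by
        refine integral_mono_of_nonneg (ae_of_all _ fun ω => abs_nonneg _)
          (hsum_abs.add (integrable_const _)) (ae_of_all _ fun ω => ?_)
        refine (abs_sub _ _).trans (add_le_add (Finset.abs_sum_le_sum_abs _ _) ?_)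
        exact (Finset.abs_sum_le_sum_abs _ _).trans
          (Finset.sum_le_sum fun i _ => abs_integral_le_integral_abs)
    _ = 2 * ∑ i ∈ s, ∫ ω, |T i ω| ∂P := by
        rw [integral_add hsum_abs (integrable_const _),
          integral_finsetSum s fun i hi => (hT i hi).abs, integral_const, probReal_univ, one_smul]
        ring

lemma integral_abs_sum_sub_integral_le_of_abs_le {ι : Type*} {s : Finset ι} {Y : ι → Ω → ℝ}
    {C : ℝ} (hC : 0 ≤ C) (hmeas : ∀ i ∈ s, AEStronglyMeasurable (Y i) P)
    (hbdd : ∀ i ∈ s, ∀ᵐ ω ∂P, |Y i ω| ≤ C)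
    (hindep : (s : Set ι).Pairwise fun i j => Y i ⟂ᵢ[P] Y j) :
    ∫ ω, |∑ i ∈ s, Y i ω - ∑ i ∈ s, ∫ ω', Y i ω' ∂P| ∂P ≤ √s.card * C := by
  have hbdd' : ∀ i ∈ s, ∀ᵐ ω ∂P, Y i ω ∈ Set.Icc (-C) C :=
    fun i hi => (hbdd i hi).mono fun ω hω => abs_le.1 hω
  have hY : ∀ i ∈ s, MemLp (Y i) 2 P := fun i hi => memLp_of_bounded (hbdd' i hi) (hmeas i hi) 2
  have hvar : variance (∑ i ∈ s, Y i) P ≤ s.card * C ^ 2 := by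
    rw [IndepFun.variance_sum hY hindep]
    calc ∑ i ∈ s, variance (Y i) P ≤ ∑ _i ∈ s, C ^ 2 := Finset.sum_le_sum fun i hi => by
          simpa using variance_le_sq_of_bounded (hbdd' i hi) (hmeas i hi).aemeasurable
      _ = s.card * C ^ 2 := by simp
  have hsum : ∫ ω, (∑ i ∈ s, Y i) ω ∂P = ∑ i ∈ s, ∫ ω, Y i ω ∂P := by
    simp only [Finset.sum_apply]
    exact integral_finsetSum s fun i hi => (hY i hi).integrable one_le_two
  calc ∫ ω, |∑ i ∈ s, Y i ω - ∑ i ∈ s, ∫ ω', Y i ω' ∂P| ∂P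
      = ∫ ω, |(∑ i ∈ s, Y i) ω - ∫ ω', (∑ i ∈ s, Y i) ω' ∂P| ∂P := by
        rw [hsum]; simp only [Finset.sum_apply]
    _ ≤ √(variance (∑ i ∈ s, Y i) P) :=
        integral_abs_sub_integral_le_sqrt_variance (memLp_finsetSum' s hY)
    _ ≤ √(s.card * C ^ 2) := Real.sqrt_le_sqrt hvar
    _ = √s.card * C := by rw [Real.sqrt_mul (Nat.cast_nonneg _), Real.sqrt_sq hC]

lemma integral_abs_sum_sub_integral_le {ι : Type*} {s : Finset ι} {X : ι → Ω → ℝ}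
    (hint : ∀ i ∈ s, Integrable (X i) P)
    (hindep : (s : Set ι).Pairwise fun i j => X i ⟂ᵢ[P] X j) (M : ℝ) :
    ∫ ω, |∑ i ∈ s, X i ω - ∑ i ∈ s, ∫ ω', X i ω' ∂P| ∂P
      ≤ √s.card * |M| + 2 * ∑ i ∈ s, ∫ ω in {ω | M < |X i ω|}, |X i ω| ∂P := by
  set trunc : ℝ → ℝ := {y | |y| ≤ M}.indicator id
  have htrunc : Measurable trunc :=
    measurable_id.indicator (measurableSet_le measurable_abs measurable_const)
  set Y : ι → Ω → ℝ := fun i => trunc ∘ X i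
  set T : ι → Ω → ℝ := fun i ω => X i ω - Y i ω
  have hY_meas : ∀ i ∈ s, AEStronglyMeasurable (Y i) P := fun i hi =>
    (htrunc.comp_aemeasurable (hint i hi).aemeasurable).aestronglyMeasurable
  have hY_bdd : ∀ i ∈ s, ∀ᵐ ω ∂P, |Y i ω| ≤ |M| := fun i _ =>
    ae_of_all _ fun ω => abs_indicator_id_le_abs M (X i ω)
  have hY_int : ∀ i ∈ s, Integrable (Y i) P := fun i hi =>
    .of_bound (hY_meas i hi) |M| (hY_bdd i hi)
  have hT_int : ∀ i ∈ s, Integrable (T i) P := fun i hi => (hint i hi).sub (hY_int i hi)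
  have hT_tail : ∀ i ∈ s, ∫ ω, |T i ω| ∂P = ∫ ω in {ω | M < |X i ω|}, |X i ω| ∂P := fun i hi => by
    simp only [T, Y, Function.comp_apply, trunc, abs_sub_indicator_eq_indicator_abs,
      setIntegral_lt_abs_eq_integral_indicator (hint i hi).aemeasurable]
  have hT_mean : ∑ i ∈ s, ∫ ω, T i ω ∂P = ∑ i ∈ s, ∫ ω, X i ω ∂P - ∑ i ∈ s, ∫ ω, Y i ω ∂P := by
    rw [← Finset.sum_sub_distrib]
    exact Finset.sum_congr rfl fun i hi => integral_sub (hint i hi) (hY_int i hi)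
  have hsplit : ∀ ω, ∑ i ∈ s, X i ω - ∑ i ∈ s, ∫ ω', X i ω' ∂P
      = (∑ i ∈ s, Y i ω - ∑ i ∈ s, ∫ ω', Y i ω' ∂P)
        + (∑ i ∈ s, T i ω - ∑ i ∈ s, ∫ ω', T i ω' ∂P) := fun ω => by
    rw [hT_mean]
    simp only [T, Finset.sum_sub_distrib]
    ring
  calc ∫ ω, |∑ i ∈ s, X i ω - ∑ i ∈ s, ∫ ω', X i ω' ∂P| ∂P
      = ∫ ω, |(∑ i ∈ s, Y i ω - ∑ i ∈ s, ∫ ω', Y i ω' ∂P)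
          + (∑ i ∈ s, T i ω - ∑ i ∈ s, ∫ ω', T i ω' ∂P)| ∂P := by simp only [hsplit]
    _ ≤ ∫ ω, |∑ i ∈ s, Y i ω - ∑ i ∈ s, ∫ ω', Y i ω' ∂P| ∂P
          + ∫ ω, |∑ i ∈ s, T i ω - ∑ i ∈ s, ∫ ω', T i ω' ∂P| ∂P :=
        integral_abs_add_le ((integrable_finsetSum s hY_int).sub (integrable_const _))
          ((integrable_finsetSum s hT_int).sub (integrable_const _))
    _ ≤ √s.card * |M| + 2 * ∑ i ∈ s, ∫ ω, |T i ω| ∂P := by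
        gcongr
        · exact integral_abs_sum_sub_integral_le_of_abs_le (abs_nonneg M) hY_meas hY_bdd
            fun i hi j hj hij => (hindep hi hj hij).comp htrunc htrunc
        · exact integral_abs_sum_sub_integral_le_two_mul hT_int
    _ = √s.card * |M| + 2 * ∑ i ∈ s, ∫ ω in {ω | M < |X i ω|}, |X i ω| ∂P := by
        rw [Finset.sum_congr rfl hT_tail]

theorem tendsto_integral_abs_average_sub_average_integral {X : ℕ → ℕ → Ω → ℝ}
    (hint : ∀ n, ∀ k ∈ Finset.Icc 1 n, Integrable (X n k) P)
    (hindep : ∀ n, (Finset.Icc 1 n : Set ℕ).Pairwise fun i j => X n i ⟂ᵢ[P] X n j)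
    (hUI : ∀ δ > (0 : ℝ), ∃ M : ℝ, ∀ n, ∀ k ∈ Finset.Icc 1 n,
      ∫ ω in {ω | M < |X n k ω|}, |X n k ω| ∂P ≤ δ) :
    Tendsto (fun n : ℕ => ∫ ω, |(n : ℝ)⁻¹ * ∑ k ∈ Finset.Icc 1 n, X n k ω
      - (n : ℝ)⁻¹ * ∑ k ∈ Finset.Icc 1 n, ∫ ω', X n k ω' ∂P| ∂P) atTop (𝓝 0) := by
  refine NormedAddGroup.tendsto_nhds_zero.2 fun ε hε => ?_
  obtain ⟨M, hM⟩ := hUI (ε / 4) (by positivity)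
  have hsqrt : Tendsto (fun n : ℕ => |M| / √n) atTop (𝓝 0) :=
    tendsto_const_nhds.div_atTop (Real.tendsto_sqrt_atTop.comp tendsto_natCast_atTop_atTop)
  filter_upwards [hsqrt.eventually (gt_mem_nhds (by positivity : 0 < ε / 4)),
    eventually_gt_atTop 0] with n hsmall hn
  have hn' : (0 : ℝ) < n := Nat.cast_pos.2 hn
  have htail : ∑ k ∈ Finset.Icc 1 n, ∫ ω in {ω | M < |X n k ω|}, |X n k ω| ∂P ≤ n * (ε / 4) := by
    simpa using Finset.sum_le_card_nsmul _ _ _ (hM n)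
  rw [Real.norm_of_nonneg (integral_nonneg fun _ => abs_nonneg _)]
  calc ∫ ω, |(n : ℝ)⁻¹ * ∑ k ∈ Finset.Icc 1 n, X n k ω
        - (n : ℝ)⁻¹ * ∑ k ∈ Finset.Icc 1 n, ∫ ω', X n k ω' ∂P| ∂P
      = (n : ℝ)⁻¹ * ∫ ω, |∑ k ∈ Finset.Icc 1 n, X n k ω
          - ∑ k ∈ Finset.Icc 1 n, ∫ ω', X n k ω' ∂P| ∂P := by
        rw [← integral_const_mul]
        simp only [← mul_sub, abs_mul, abs_of_pos (inv_pos.2 hn')]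
    _ ≤ (n : ℝ)⁻¹ * (√n * |M| + 2 * (n * (ε / 4))) := by
        refine mul_le_mul_of_nonneg_left ?_ (inv_nonneg.2 hn'.le)
        refine (integral_abs_sum_sub_integral_le (hint n) (hindep n) M).trans ?_
        rw [Nat.card_Icc, Nat.add_sub_cancel]
        gcongr
    _ = √n / n * |M| + ε / 2 := by
        field_simp
        ring
    _ = |M| / √n + ε / 2 := by
        rw [Real.sqrt_div_self']
        ring
    _ < ε := by linarith

lemma tendstoInMeasure_of_tendsto_integral_abs_sub {ι : Type*} {l : Filter ι} {f : ι → Ω → ℝ}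
    {a : ι → ℝ} {c : ℝ} (hf : ∀ i, Integrable (f i) P)
    (hfa : Tendsto (fun i => ∫ ω, |f i ω - a i| ∂P) l (𝓝 0)) (ha : Tendsto a l (𝓝 c)) :
    TendstoInMeasure P f l fun _ => c := by
  have hfc : Tendsto (fun i => ∫ ω, |f i ω - c| ∂P) l (𝓝 0) := by
    have hle : ∀ i, ∫ ω, |f i ω - c| ∂P ≤ ∫ ω, |f i ω - a i| ∂P + |a i - c| := fun i => by
      have hdev : ∀ b, Integrable (fun ω => |f i ω - b|) P := fun b =>
        ((hf i).sub (integrable_const b)).abs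
      calc ∫ ω, |f i ω - c| ∂P ≤ ∫ ω, (|f i ω - a i| + |a i - c|) ∂P :=
            integral_mono (hdev c) ((hdev (a i)).add (integrable_const _))
              fun ω => abs_sub_le _ _ _
        _ = ∫ ω, |f i ω - a i| ∂P + |a i - c| := by
            rw [integral_add (hdev (a i)) (integrable_const _), integral_const, probReal_univ,
              one_smul]
    have hac : Tendsto (fun i => |a i - c|) l (𝓝 0) := by
      simpa using (ha.sub_const c).abs
    exact squeeze_zero (fun i => integral_nonneg fun _ => abs_nonneg _) hle
      (by simpa using hfa.add hac)
  refine tendstoInMeasure_of_tendsto_eLpNorm one_ne_zero (fun i => (hf i).aestronglyMeasurable)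
    aestronglyMeasurable_const ?_
  have heq : ∀ i, eLpNorm (f i - fun _ => c) 1 P = ENNReal.ofReal (∫ ω, |f i ω - c| ∂P) :=
    fun i => by
      rw [eLpNorm_one_eq_lintegral_enorm,
        ← ofReal_integral_norm_eq_lintegral_enorm ((hf i).sub (integrable_const c))]
      rfl
  simpa [heq] using ENNReal.tendsto_ofReal hfc

end

lemma natCast_div_mem_Icc {n k : ℕ} (hk : k ≤ n) : (k : ℝ) / n ∈ Set.Icc (0 : ℝ) 1 :=
  ⟨by positivity, div_le_one_of_le₀ (by exact_mod_cast hk) (by positivity)⟩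

theorem stmt_0_general
    {Ω : Type*} [MeasurableSpace Ω] (P : Measure Ω) [IsProbabilityMeasure P]
    {d : ℕ} (ε : ℕ → Ω → EuclideanSpace ℝ (Fin d))
    (hmeas : ∀ k, Measurable (ε k))
    (hindep : iIndepFun ε P)
    (hident : ∀ k, Measure.map (ε k) P = Measure.map (ε 1) P)
    (F : EuclideanSpace ℝ (Fin d) → ℝ → ℝ)
    (hF : Measurable (fun p : EuclideanSpace ℝ (Fin d) × ℝ => F p.1 p.2))
    (hint : ∀ t ∈ Set.Icc (0:ℝ) 1, Integrable (fun ω => F (ε 1 ω) t) P)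
    (hUI : ∀ δ > (0:ℝ), ∃ M : ℝ, ∀ t ∈ Set.Icc (0:ℝ) 1,
      ∫ ω in {ω | M < |F (ε 1 ω) t|}, |F (ε 1 ω) t| ∂P ≤ δ)
    (hRiem : Tendsto (fun n : ℕ =>
        (n:ℝ)⁻¹ * ∑ k ∈ Finset.Icc 1 n, ∫ ω, F (ε 1 ω) ((k:ℝ)/(n:ℝ)) ∂P)
      atTop (𝓝 (∫ t in (0:ℝ)..1, ∫ ω, F (ε 1 ω) t ∂P))) :
    TendstoInMeasure P
      (fun (n : ℕ) ω => (n:ℝ)⁻¹ * ∑ k ∈ Finset.Icc 1 n, F (ε k ω) ((k:ℝ)/(n:ℝ)))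
      atTop
      (fun _ => ∫ t in (0:ℝ)..1, ∫ ω, F (ε 1 ω) t ∂P) := by
  have hFt : ∀ t, Measurable fun x => F x t := fun t =>
    hF.comp (measurable_id.prodMk measurable_const)
  have hid : ∀ k t, IdentDistrib (fun ω => F (ε k ω) t) (fun ω => F (ε 1 ω) t) P P := fun k t =>
    (IdentDistrib.mk (hmeas k).aemeasurable (hmeas 1).aemeasurable (hident k)).comp (hFt t)
  have hXint : ∀ n, ∀ k ∈ Finset.Icc 1 n, Integrable (fun ω => F (ε k ω) ((k : ℝ) / n)) P :=
    fun n k hk => (hid k _).integrable_iff.2 (hint _ (natCast_div_mem_Icc (Finset.mem_Icc.1 hk).2))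
  have hmean : ∀ n : ℕ, ∑ k ∈ Finset.Icc 1 n, ∫ ω, F (ε k ω) ((k : ℝ) / n) ∂P
      = ∑ k ∈ Finset.Icc 1 n, ∫ ω, F (ε 1 ω) ((k : ℝ) / n) ∂P := fun n =>
    Finset.sum_congr rfl fun k _ => (hid k _).integral_eq
  have hXUI : ∀ δ > (0 : ℝ), ∃ M : ℝ, ∀ n, ∀ k ∈ Finset.Icc 1 n,
      ∫ ω in {ω | M < |F (ε k ω) ((k : ℝ) / n)|}, |F (ε k ω) ((k : ℝ) / n)| ∂P ≤ δ :=
    fun δ hδ => (hUI δ hδ).imp fun M hM n k hk =>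
      (hid k _).setIntegral_lt_abs_eq M ▸ hM _ (natCast_div_mem_Icc (Finset.mem_Icc.1 hk).2)
  have hL1 := tendsto_integral_abs_average_sub_average_integral
    (X := fun n k ω => F (ε k ω) ((k : ℝ) / n)) hXint
    (fun n i _ j _ hij => (hindep.indepFun hij).comp (hFt _) (hFt _)) hXUI
  exact tendstoInMeasure_of_tendsto_integral_abs_sub
    (fun n => (integrable_finsetSum _ (hXint n)).const_mul _) hL1
    (by simpa only [hmean] using hRiem)

/-- Law of large numbers for triangular arrays built from an i.i.d. sequence:
if `(ε k)` is i.i.d., `F` is measurable, `sup_{t ∈ [0,1]} E|F(ε₁,t)| < ∞`, the family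
`{F(ε₁,t), t ∈ [0,1]}` is uniformly integrable uniformly in `t`, and `t ↦ E F(ε₁,t)` is
Riemann-integrable on `[0,1]` (its right-endpoint Riemann sums converge to its integral),
then `(1/n) ∑_{k=1}^n F(ε_k, k/n)` converges in probability to `∫₀¹ E F(ε₁,t) dt`. -/
theorem stmt_0
    {Ω : Type*} [MeasurableSpace Ω] (P : Measure Ω) [IsProbabilityMeasure P]
    {d : ℕ} (ε : ℕ → Ω → EuclideanSpace ℝ (Fin d))
    (hmeas : ∀ k, Measurable (ε k))
    (hindep : iIndepFun ε P)
    (hident : ∀ k, Measure.map (ε k) P = Measure.map (ε 1) P)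
    (F : EuclideanSpace ℝ (Fin d) → ℝ → ℝ)
    (hF : Measurable (fun p : EuclideanSpace ℝ (Fin d) × ℝ => F p.1 p.2))
    (hint : ∀ t ∈ Set.Icc (0:ℝ) 1, Integrable (fun ω => F (ε 1 ω) t) P)
    (hbound : ∃ C : ℝ, ∀ t ∈ Set.Icc (0:ℝ) 1, ∫ ω, |F (ε 1 ω) t| ∂P ≤ C)
    (hUI : ∀ δ > (0:ℝ), ∃ M : ℝ, ∀ t ∈ Set.Icc (0:ℝ) 1,
      ∫ ω in {ω | M < |F (ε 1 ω) t|}, |F (ε 1 ω) t| ∂P ≤ δ)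
    (hRiem : Tendsto (fun n : ℕ =>
        (n:ℝ)⁻¹ * ∑ k ∈ Finset.Icc 1 n, ∫ ω, F (ε 1 ω) ((k:ℝ)/(n:ℝ)) ∂P)
      atTop (𝓝 (∫ t in (0:ℝ)..1, ∫ ω, F (ε 1 ω) t ∂P))) :
    TendstoInMeasure P
      (fun (n : ℕ) ω => (n:ℝ)⁻¹ * ∑ k ∈ Finset.Icc 1 n, F (ε k ω) ((k:ℝ)/(n:ℝ)))
      atTop
      (fun _ => ∫ t in (0:ℝ)..1, ∫ ω, F (ε 1 ω) t ∂P) :=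
  stmt_0_general P ε hmeas hindep hident F hF hint hUI hRiem
end

section
/- Consider the linear trajectory model S_θ(t) = (∑_{k=1}^p a_k e_k(t), ∑_{k=1}^p b_k e_k(t)) with parameter θ = (a₁,…,a_p,b₁,…,b_p)^T, and the bearing function Ψ(x,t) = arctan[(x₂ − O₂(t))/(x₁ − O₁(t))]. Assume θ* lies in the interior of Θ ⊆ ℝ^{2p} and that S_θ(t)₁ − O₁(t) > 0 for all θ ∈ Θ and t ∈ [0,1]. Then the following are equivalent: (i) the observability assumption (Obs) holds at θ* (i.e. Ψ(S_θ(t),t) = Ψ(S_{θ*}(t),t) for all t ∈ [0,1] implies θ = θ* for θ ∈ Θ); (ii) the matrix I_R(θ*) = ∫₀¹ ∇_θΨ(S_{θ*}(t),t) ∇_θΨ(S_{θ*}(t),t)^T dt is nonsingular; (iii) the 2p functions e₁,…,e_p, e₁·m(θ*,·),…,e_p·m(θ*,·) are linearly independent in the space of continuous functions on [0,1], where m(θ*,t) = (S_{θ*}(t)₂ − O₂(t))/(S_{θ*}(t)₁ − O₁(t)). -/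
open MeasureTheory Filter Matrix
open scoped BigOperators Topology

/-!
Since `S_θ` is linear in `θ`, two parameters give the same bearing at time `t` exactly when
`S_θ(t) - S_{θ*}(t)` is parallel to `S_{θ*}(t) - O(t)`. For `θ - θ* = (Δa, Δb)` this says that
the combination of `e_k` and `e_k·m(θ*,·)` with coefficients `(Δb, -Δa)` vanishes at `t`: a
linear condition on `θ - θ*`. As `θ*` is interior, every solution can be scaled into `Θ`, so
(Obs) is the injectivity of this linear map, which is (iii).

The same combination, with coefficients obtained from `c` by the same quarter turn, times the
nonvanishing factor `(S₁ - O₁) / |S - O|²`, is the directional derivative `⟨c, ∇_θΨ⟩`. Hence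
`I_R(θ*)` is the Gram matrix of continuous functions whose linear independence on `[0,1]` is
again (iii), and a Gram matrix is nonsingular iff its functions are independent.
-/

open Real Set Sum

theorem forall_sub_imp_eq_iff_of_mem_nhds {𝕜 E : Type*} [NontriviallyNormedField 𝕜]
    [AddCommGroup E] [TopologicalSpace E] [ContinuousAdd E] [Module 𝕜 E] [ContinuousSMul 𝕜 E]
    {P : E → Prop} (hP : ∀ (a : 𝕜) v, P v → P (a • v)) {s : Set E} {x : E} (hs : s ∈ 𝓝 x) :
    (∀ y ∈ s, P (y - x) → y = x) ↔ ∀ v, P v → v = 0 := by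
  refine ⟨fun h v hv => ?_, fun h y _ hy => sub_eq_zero.1 (h _ hy)⟩
  have hline : Tendsto (fun a : 𝕜 => x + a • v) (𝓝[≠] 0) (𝓝 x) := by
    have : Continuous fun a : 𝕜 => x + a • v := by fun_prop
    simpa using (this.tendsto 0).mono_left nhdsWithin_le_nhds
  obtain ⟨a, has, ha⟩ := ((hline.eventually hs).and self_mem_nhdsWithin).exists
  have := h _ has (by simpa using hP a v hv)
  exact (smul_eq_zero.1 (add_eq_left.1 this)).resolve_left ha

theorem LinearEquiv.forall_imp_eq_zero_iff {R M N : Type*} [Semiring R] [AddCommMonoid M]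
    [AddCommMonoid N] [Module R M] [Module R N] (f : M ≃ₗ[R] N) (P : N → Prop) :
    (∀ c, P c → c = 0) ↔ ∀ v, P (f v) → v = 0 := by
  simp only [f.surjective.forall, LinearEquiv.map_eq_zero_iff]

section Gram

variable {ι : Type*} [Fintype ι] {g : ι → ℝ → ℝ} {a b : ℝ} {G : Matrix ι ι ℝ}

theorem mulVec_apply_eq_integral_of_gram (hab : a ≤ b) (hg : ∀ i, ContinuousOn (g i) (Icc a b))
    (hG : ∀ i j, G i j = ∫ t in a..b, g i t * g j t) (c : ι → ℝ) (i : ι) :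
    (G *ᵥ c) i = ∫ t in a..b, g i t * ∑ j, c j * g j t := by
  have hint : ∀ j, IntervalIntegrable (fun t => g i t * g j t * c j) volume a b := fun j =>
    (((hg i).mul (hg j)).intervalIntegrable_of_Icc hab).mul_const _
  simp only [mulVec, dotProduct, hG, ← intervalIntegral.integral_mul_const,
    ← intervalIntegral.integral_finsetSum fun j _ => hint j, Finset.mul_sum]
  simp only [mul_comm, mul_left_comm]

theorem dotProduct_mulVec_eq_integral_sq_of_gram (hab : a ≤ b)
    (hg : ∀ i, ContinuousOn (g i) (Icc a b)) (hG : ∀ i j, G i j = ∫ t in a..b, g i t * g j t)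
    (c : ι → ℝ) : c ⬝ᵥ (G *ᵥ c) = ∫ t in a..b, (∑ j, c j * g j t) ^ 2 := by
  have hint : ∀ i, IntervalIntegrable (fun t => c i * (g i t * ∑ j, c j * g j t)) volume a b :=
    fun i => ((((hg i).mul (continuousOn_finsetSum _ fun j _ =>
      continuousOn_const.mul (hg j))).intervalIntegrable_of_Icc hab)).const_mul _
  simp only [dotProduct, mulVec_apply_eq_integral_of_gram hab hg hG,
    ← intervalIntegral.integral_const_mul, ← intervalIntegral.integral_finsetSum fun i _ => hint i]
  simp only [sq, Finset.sum_mul, mul_assoc]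

theorem mulVec_eq_zero_iff_of_gram (hab : a < b) (hg : ∀ i, ContinuousOn (g i) (Icc a b))
    (hG : ∀ i j, G i j = ∫ t in a..b, g i t * g j t) (c : ι → ℝ) :
    G *ᵥ c = 0 ↔ ∀ t ∈ Icc a b, ∑ i, c i * g i t = 0 := by
  refine ⟨fun hc t ht => ?_, fun hc => funext fun i => ?_⟩
  · have hsq : ∫ t in a..b, (∑ j, c j * g j t) ^ 2 = 0 := by
      rw [← dotProduct_mulVec_eq_integral_sq_of_gram hab.le hg hG, hc, dotProduct_zero]
    by_contra hne
    have hcont : ContinuousOn (fun t => (∑ j, c j * g j t) ^ 2) (Icc a b) :=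
      (continuousOn_finsetSum _ fun j _ => continuousOn_const.mul (hg j)).pow 2
    exact (intervalIntegral.integral_pos hab hcont (fun _ _ => sq_nonneg _)
      ⟨t, ht, pow_two_pos_of_ne_zero hne⟩).ne' hsq
  · rw [mulVec_apply_eq_integral_of_gram hab.le hg hG, Pi.zero_apply]
    refine (intervalIntegral.integral_congr fun t ht => ?_).trans intervalIntegral.integral_zero
    rw [uIcc_of_le hab.le] at ht
    simp [hc t ht]

theorem det_ne_zero_iff_of_gram [DecidableEq ι] (hab : a < b)
    (hg : ∀ i, ContinuousOn (g i) (Icc a b)) (hG : ∀ i j, G i j = ∫ t in a..b, g i t * g j t) :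
    G.det ≠ 0 ↔ ∀ c : ι → ℝ, (∀ t ∈ Icc a b, ∑ i, c i * g i t = 0) → c = 0 := by
  simp only [ne_eq, ← exists_mulVec_eq_zero_iff, not_exists, not_and', not_not,
    mulVec_eq_zero_iff_of_gram hab hg hG]

end Gram

theorem HasFDerivAt.arctan_div {E : Type*} [NormedAddCommGroup E] [NormedSpace ℝ E]
    {n d : E → ℝ} {n' d' : E →L[ℝ] ℝ} {x : E} (hn : HasFDerivAt n n' x)
    (hd : HasFDerivAt d d' x) (hx : d x ≠ 0) :
    HasFDerivAt (fun y => Real.arctan (n y / d y))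
      ((d x ^ 2 + n x ^ 2)⁻¹ • (d x • n' - n x • d')) x := by
  have hq := (hn.mul ((hasDerivAt_inv hx).comp_hasFDerivAt x hd)).arctan
  convert hq using 1
  · ext y
    simp [div_eq_mul_inv]
  · ext v
    simp only [_root_.smul_apply, _root_.sub_apply, _root_.add_apply, _root_.neg_apply,
      smul_eq_mul, Pi.mul_apply, Function.comp_apply, one_div, neg_smul, smul_neg, smul_add]
    field_simp
    ring

theorem sum_mul_gradient_apply {ι : Type*} [Fintype ι] (f : EuclideanSpace ℝ ι → ℝ)
    (x : EuclideanSpace ℝ ι) (c : ι → ℝ) :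
    ∑ i, c i * gradient f x i = fderiv ℝ f x (WithLp.toLp 2 c) := by
  rw [← inner_gradient_left, PiLp.inner_apply]
  simp

namespace BearingsOnly

variable {ι : Type*} [Fintype ι]

def turn : EuclideanSpace ℝ (ι ⊕ ι) ≃ₗ[ℝ] (ι ⊕ ι → ℝ) where
  toFun v := Sum.elim (fun k => v (inr k)) (fun k => -v (inl k))
  invFun c := WithLp.toLp 2 (Sum.elim (fun k => -c (inr k)) (fun k => c (inl k)))
  map_add' v w := by ext (k | k) <;> simp [add_comm]
  map_smul' a v := by ext (k | k) <;> simp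
  left_inv v := by ext (k | k) <;> simp
  right_inv c := by ext (k | k) <;> simp

/-- The combination of condition (iii) at one time `t`, with `E = e(t)` and `m = m(θ*, t)`. -/
def obsComb (E : ι → ℝ) (m : ℝ) (c : ι ⊕ ι → ℝ) : ℝ :=
  ∑ i, c (inl i) * E i + ∑ i, c (inr i) * (E i * m)

theorem obsComb_smul (E : ι → ℝ) (m a : ℝ) (c : ι ⊕ ι → ℝ) :
    obsComb E m (a • c) = a * obsComb E m c := by
  simp only [obsComb, Pi.smul_apply, smul_eq_mul, mul_add, Finset.mul_sum, mul_assoc]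

theorem obsComb_turn (E : ι → ℝ) (m : ℝ) (v : EuclideanSpace ℝ (ι ⊕ ι)) :
    obsComb E m (turn v) = ∑ k, v (inr k) * E k - (∑ k, v (inl k) * E k) * m := by
  simp [obsComb, turn, Finset.sum_mul, mul_assoc, sub_eq_add_neg]

section

variable (E : ι → ℝ) (o₁ o₂ : ℝ)

theorem arctan_eq_iff_obsComb_turn_eq_zero {θ θ' : EuclideanSpace ℝ (ι ⊕ ι)}
    (hθ : ∑ k, θ (inl k) * E k - o₁ ≠ 0) (hθ' : ∑ k, θ' (inl k) * E k - o₁ ≠ 0) :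
    arctan ((∑ k, θ (inr k) * E k - o₂) / (∑ k, θ (inl k) * E k - o₁)) =
        arctan ((∑ k, θ' (inr k) * E k - o₂) / (∑ k, θ' (inl k) * E k - o₁)) ↔
      obsComb E ((∑ k, θ' (inr k) * E k - o₂) / (∑ k, θ' (inl k) * E k - o₁))
        (turn (θ - θ')) = 0 := by
  rw [arctan_injective.eq_iff, div_eq_div_iff hθ hθ', obsComb_turn]
  simp only [PiLp.sub_apply, sub_mul, Finset.sum_sub_distrib]
  field_simp
  constructor <;> intro h <;> linarith

theorem hasFDerivAt_sum_apply_mul_sub {κ : Type*} [Fintype κ] (j : ι → κ)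
    (x : EuclideanSpace ℝ κ) (o : ℝ) :
    HasFDerivAt (fun θ : EuclideanSpace ℝ κ => ∑ k, θ (j k) * E k - o)
      (∑ k, E k • PiLp.proj (𝕜 := ℝ) 2 (fun _ : κ => ℝ) (j k)) x :=
  (HasFDerivAt.fun_sum fun k _ => (PiLp.hasFDerivAt_apply 2 x (j k)).mul_const (E k)).sub_const o

theorem sum_mul_gradient_arctan {x : EuclideanSpace ℝ (ι ⊕ ι)}
    (hx : ∑ k, x (inl k) * E k - o₁ ≠ 0) (c : ι ⊕ ι → ℝ) :
    ∑ i, c i * gradient (fun θ : EuclideanSpace ℝ (ι ⊕ ι) =>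
        arctan ((∑ k, θ (inr k) * E k - o₂) / (∑ k, θ (inl k) * E k - o₁))) x i =
      (∑ k, x (inl k) * E k - o₁) /
          ((∑ k, x (inl k) * E k - o₁) ^ 2 + (∑ k, x (inr k) * E k - o₂) ^ 2) *
        obsComb E ((∑ k, x (inr k) * E k - o₂) / (∑ k, x (inl k) * E k - o₁))
          (turn (WithLp.toLp 2 c)) := by
  rw [sum_mul_gradient_apply, ((hasFDerivAt_sum_apply_mul_sub E inr x o₂).arctan_div
    (hasFDerivAt_sum_apply_mul_sub E inl x o₁) hx).fderiv, obsComb_turn]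
  simp only [_root_.smul_apply, _root_.sub_apply, _root_.sum_apply, PiLp.proj_apply,
    smul_eq_mul, mul_comm (E _)]
  field_simp

end

theorem continuousOn_gradient_arctan {s : Set ℝ} {e : ι → ℝ → ℝ} {O₁ O₂ : ℝ → ℝ}
    (he : ∀ k, ContinuousOn (e k) s) (hO₁ : ContinuousOn O₁ s) (hO₂ : ContinuousOn O₂ s)
    {x : EuclideanSpace ℝ (ι ⊕ ι)} (hx : ∀ t ∈ s, ∑ k, x (inl k) * e k t - O₁ t ≠ 0)
    [DecidableEq ι] (i : ι ⊕ ι) :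
    ContinuousOn (fun t => gradient (fun θ : EuclideanSpace ℝ (ι ⊕ ι) =>
      arctan ((∑ k, θ (inr k) * e k t - O₂ t) / (∑ k, θ (inl k) * e k t - O₁ t))) x i) s := by
  have hQ : ∀ t ∈ s,
      (∑ k, x (inl k) * e k t - O₁ t) ^ 2 + (∑ k, x (inr k) * e k t - O₂ t) ^ 2 ≠ 0 :=
    fun t ht => by have := hx t ht; positivity
  refine ContinuousOn.congr ?_ fun t ht =>
    ((single_dotProduct _ 1 i).trans (one_mul _)).symm.trans
      (sum_mul_gradient_arctan (fun k => e k t) (O₁ t) (O₂ t) (hx t ht) (Pi.single i 1))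
  simp only [obsComb_turn]
  fun_prop (disch := assumption)

end BearingsOnly

open BearingsOnly

/-- For the linear trajectory model
`S_θ(t) = (∑ a_k e_k(t), ∑ b_k e_k(t))` with bearing function
`Ψ(x,t) = arctan((x₂ − O₂(t))/(x₁ − O₁(t)))`, if `θ*` is interior to `Θ` and
`S_θ(t)₁ − O₁(t) > 0` on `Θ × [0,1]`, the following are equivalent:
(i) observability (Obs) at `θ*`;
(ii) nonsingularity of `I_R(θ*)`;
(iii) linear independence on `[0,1]` of `e₁,…,e_p, e₁·m(θ*,·),…,e_p·m(θ*,·)`,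
where `m(θ*,t) = (S_{θ*}(t)₂ − O₂(t))/(S_{θ*}(t)₁ − O₁(t))`.
The parameter `θ = (a,b)` is indexed by `Fin p ⊕ Fin p` (first the `a`'s, then the `b`'s). -/
theorem stmt_7
    {p : ℕ}
    (e : Fin p → ℝ → ℝ) (he : ∀ i, ContinuousOn (e i) (Set.Icc (0:ℝ) 1))
    (O₁ O₂ : ℝ → ℝ)
    (hO₁ : ContinuousOn O₁ (Set.Icc (0:ℝ) 1)) (hO₂ : ContinuousOn O₂ (Set.Icc (0:ℝ) 1))
    (Θ : Set (EuclideanSpace ℝ (Fin p ⊕ Fin p)))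
    (θstar : EuclideanSpace ℝ (Fin p ⊕ Fin p)) (hθstar : θstar ∈ interior Θ)
    -- positivity of the denominator: S_θ(t)₁ − O₁(t) > 0 on Θ × [0,1]
    (hpos : ∀ θ ∈ Θ, ∀ t ∈ Set.Icc (0:ℝ) 1,
      0 < (∑ i, θ (Sum.inl i) * e i t) - O₁ t)
    -- the matrix I_R(θ*)
    (IR : Matrix (Fin p ⊕ Fin p) (Fin p ⊕ Fin p) ℝ)
    (hIR : ∀ i j, IR i j = ∫ t in (0:ℝ)..1,
      gradient (fun θ : EuclideanSpace ℝ (Fin p ⊕ Fin p) =>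
        Real.arctan (((∑ k, θ (Sum.inr k) * e k t) - O₂ t) /
          ((∑ k, θ (Sum.inl k) * e k t) - O₁ t))) θstar i *
      gradient (fun θ : EuclideanSpace ℝ (Fin p ⊕ Fin p) =>
        Real.arctan (((∑ k, θ (Sum.inr k) * e k t) - O₂ t) /
          ((∑ k, θ (Sum.inl k) * e k t) - O₁ t))) θstar j) :
    -- (i) ↔ (iii)
    ((∀ θ ∈ Θ,
        (∀ t ∈ Set.Icc (0:ℝ) 1,
          Real.arctan (((∑ k, θ (Sum.inr k) * e k t) - O₂ t) /
              ((∑ k, θ (Sum.inl k) * e k t) - O₁ t))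
            = Real.arctan (((∑ k, θstar (Sum.inr k) * e k t) - O₂ t) /
              ((∑ k, θstar (Sum.inl k) * e k t) - O₁ t)))
        → θ = θstar)
      ↔ (∀ c : Fin p ⊕ Fin p → ℝ,
          (∀ t ∈ Set.Icc (0:ℝ) 1,
            (∑ i, c (Sum.inl i) * e i t)
              + (∑ i, c (Sum.inr i) * (e i t *
                  (((∑ k, θstar (Sum.inr k) * e k t) - O₂ t) /
                    ((∑ k, θstar (Sum.inl k) * e k t) - O₁ t)))) = 0)
          → c = 0))
    -- (ii) ↔ (iii)
    ∧ (IR.det ≠ 0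
      ↔ (∀ c : Fin p ⊕ Fin p → ℝ,
          (∀ t ∈ Set.Icc (0:ℝ) 1,
            (∑ i, c (Sum.inl i) * e i t)
              + (∑ i, c (Sum.inr i) * (e i t *
                  (((∑ k, θstar (Sum.inr k) * e k t) - O₂ t) /
                    ((∑ k, θstar (Sum.inl k) * e k t) - O₁ t)))) = 0)
          → c = 0)) := by
  have hD : ∀ t ∈ Set.Icc (0:ℝ) 1, ∑ k, θstar (Sum.inl k) * e k t - O₁ t ≠ 0 :=
    fun t ht => (hpos θstar (interior_subset hθstar) t ht).ne'
  set P : (Fin p ⊕ Fin p → ℝ) → Prop := fun c => ∀ t ∈ Set.Icc (0:ℝ) 1,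
    obsComb (fun k => e k t) ((∑ k, θstar (Sum.inr k) * e k t - O₂ t) /
      (∑ k, θstar (Sum.inl k) * e k t - O₁ t)) c = 0
  refine ⟨Iff.trans ?_ (turn.forall_imp_eq_zero_iff P).symm, Iff.trans ?_
    (((WithLp.linearEquiv 2 ℝ _).symm.trans turn).forall_imp_eq_zero_iff P).symm⟩
  · refine Iff.trans ?_ (forall_sub_imp_eq_iff_of_mem_nhds (P := fun v => P (turn v))
      (fun a v hv t ht => by rw [map_smul, obsComb_smul, hv t ht, mul_zero])
      (mem_interior_iff_mem_nhds.1 hθstar))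
    exact forall₂_congr fun θ hθ => imp_congr_left <| forall₂_congr fun t ht =>
      arctan_eq_iff_obsComb_turn_eq_zero _ _ _ (hpos θ hθ t ht).ne' (hD t ht)
  · rw [det_ne_zero_iff_of_gram zero_lt_one
      (continuousOn_gradient_arctan he hO₁ hO₂ hD) hIR]
    refine forall_congr' fun c => imp_congr_left <| forall₂_congr fun t ht => ?_
    rw [sum_mul_gradient_arctan _ _ _ (hD t ht), mul_eq_zero_iff_left]
    · rfl
    · have := hD t ht
      positivity
end

section
/- Let o ∈ ℝ² and Ψ(y) = arctan[(y₂ − o₂)/(y₁ − o₁)]. Let x ∈ ℝ² with R = ‖x − o‖ > 0 and x₁ ≠ o₁, and let ε be an ℝ²-valued random variable with E‖ε‖² < ∞ such that almost surely (x₁ − o₁)(x₁ − o₁ + ε₁) > 0. Then for every a ∈ (0,1), E{Ψ(x+ε) − Ψ(x)}² ≤ (E‖ε‖²/R²)·(π²/a² + 1/(1−a)²); in particular, taking a = 1/(1 + π^{−2/3}), E{Ψ(x+ε) − Ψ(x)}² ≤ π²(1 + π^{−2/3})³ · E‖ε‖²/R². -/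
/-!
Split according to the size of the error. If `‖ε‖ ≥ a R`, the two bearings differ by at most `π`
and `1 ≤ ‖ε‖² / (a² R²)`. If `‖ε‖ < a R`, the segment from `x` to `x + ε` stays at distance at
least `(1 - a) R` from `o`, and by the sign condition it never meets the line `y₁ = o₁`; along it
the derivative of `Ψ` is bounded by `‖ε‖ / ‖y - o‖`, so the mean value theorem gives
`|Ψ(x + ε) - Ψ(x)| ≤ ‖ε‖ / ((1 - a) R)`. The sum of the two squared bounds holds pointwise, and
integrating it gives the first claim; the second is the choice of `a` minimising the constant.
-/

open MeasureTheory Real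

noncomputable def bearing (o y : EuclideanSpace ℝ (Fin 2)) : ℝ :=
  arctan ((y 1 - o 1) / (y 0 - o 0))

lemma sq_arctan_sub_arctan_le (u v : ℝ) : (arctan u - arctan v) ^ 2 ≤ π ^ 2 := by
  nlinarith [arctan_lt_pi_div_two u, arctan_lt_pi_div_two v,
    neg_pi_div_two_lt_arctan u, neg_pi_div_two_lt_arctan v]

lemma HasDerivAt.arctan_div {X Y : ℝ → ℝ} {X' Y' t : ℝ} (hX : HasDerivAt X X' t)
    (hY : HasDerivAt Y Y' t) (hX0 : X t ≠ 0) :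
    HasDerivAt (fun s => Real.arctan (Y s / X s))
      ((X t * Y' - Y t * X') / (X t ^ 2 + Y t ^ 2)) t := by
  refine (hY.div hX hX0).arctan.congr_deriv ?_
  have : X t ^ 2 + Y t ^ 2 ≠ 0 := by positivity
  simp only [Pi.div_apply]
  field_simp

lemma abs_cross_le_norm_mul_norm (y e : EuclideanSpace ℝ (Fin 2)) :
    |y 0 * e 1 - y 1 * e 0| ≤ ‖y‖ * ‖e‖ := by
  refine abs_le_of_sq_le_sq ?_ (by positivity)
  rw [mul_pow, EuclideanSpace.real_norm_sq_eq, EuclideanSpace.real_norm_sq_eq,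
    Fin.sum_univ_two, Fin.sum_univ_two]
  nlinarith [sq_nonneg (y 0 * e 0 + y 1 * e 1)]

lemma hasDerivAt_bearing_add_smul (o x e : EuclideanSpace ℝ (Fin 2)) {t : ℝ}
    (ht : (x + t • e) 0 ≠ o 0) :
    HasDerivAt (fun s : ℝ => bearing o (x + s • e))
      (((x + t • e - o) 0 * e 1 - (x + t • e - o) 1 * e 0) / ‖x + t • e - o‖ ^ 2) t := by
  have hline (i : Fin 2) : HasDerivAt (fun s : ℝ => (x + s • e) i - o i) (e i) t := by
    simpa using (((hasDerivAt_id t).mul_const (e i)).const_add (x i)).sub_const (o i)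
  have hX0 : (x + t • e) 0 - o 0 ≠ 0 := sub_ne_zero.mpr ht
  refine ((hline 0).arctan_div (hline 1) hX0).congr_deriv ?_
  rw [EuclideanSpace.real_norm_sq_eq, Fin.sum_univ_two]
  simp only [PiLp.sub_apply]

lemma abs_bearing_add_sub_le {o x e : EuclideanSpace ℝ (Fin 2)} {ρ : ℝ} (hρ : 0 < ρ)
    (hseg : ∀ t ∈ Set.Icc (0 : ℝ) 1, (x + t • e) 0 ≠ o 0 ∧ ρ ≤ ‖x + t • e - o‖) :
    |bearing o (x + e) - bearing o x| ≤ ‖e‖ / ρ := by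
  have hderiv_le : ∀ t ∈ Set.Icc (0 : ℝ) 1,
      ‖((x + t • e - o) 0 * e 1 - (x + t • e - o) 1 * e 0) / ‖x + t • e - o‖ ^ 2‖
        ≤ ‖e‖ / ρ := by
    intro t ht
    obtain ⟨-, hρy⟩ := hseg t ht
    set y := x + t • e - o
    have hy : 0 < ‖y‖ := hρ.trans_le hρy
    calc ‖(y 0 * e 1 - y 1 * e 0) / ‖y‖ ^ 2‖ ≤ ‖y‖ * ‖e‖ / ‖y‖ ^ 2 := by
          rw [Real.norm_eq_abs, abs_div, abs_of_pos (pow_pos hy 2)]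
          exact div_le_div_of_nonneg_right (abs_cross_le_norm_mul_norm y e) (by positivity)
      _ = ‖e‖ / ‖y‖ := by field_simp
      _ ≤ ‖e‖ / ρ := by gcongr
  have hmvt := Convex.norm_image_sub_le_of_norm_hasDerivWithin_le
    (fun t ht => (hasDerivAt_bearing_add_smul o x e (hseg t ht).1).hasDerivWithinAt)
    hderiv_le (convex_Icc 0 1) (Set.left_mem_Icc.mpr zero_le_one)
    (Set.right_mem_Icc.mpr zero_le_one)
  simpa using hmvt

-- `p + t * q` is a convex combination of `p` and `p + q`, which have the same sign.
lemma add_mul_ne_zero_of_mul_add_pos {p q t : ℝ} (hpq : 0 < p * (p + q)) (ht0 : 0 ≤ t)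
    (ht1 : t ≤ 1) : p + t * q ≠ 0 := by
  have hp : 0 < p ^ 2 := sq_pos_of_ne_zero (left_ne_zero_of_mul hpq.ne')
  have : 0 < p * (p + t * q) := by
    rcases ht1.eq_or_lt with rfl | ht1
    · linarith
    · nlinarith [mul_pos (sub_pos.2 ht1) hp, mul_nonneg ht0 hpq.le]
  exact right_ne_zero_of_mul this.ne'

lemma sub_mul_norm_le_norm_add_smul_sub {E : Type*} [SeminormedAddCommGroup E]
    [NormedSpace ℝ E] {x e o : E} {t a : ℝ} (ht0 : 0 ≤ t) (ht1 : t ≤ 1)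
    (he : ‖e‖ ≤ a * ‖x - o‖) : (1 - a) * ‖x - o‖ ≤ ‖x + t • e - o‖ :=
  calc (1 - a) * ‖x - o‖ ≤ ‖x - o‖ - t * ‖e‖ := by nlinarith [norm_nonneg e]
    _ = ‖x - o‖ - ‖t • e‖ := by rw [norm_smul, Real.norm_of_nonneg ht0]
    _ ≤ ‖x + t • e - o‖ := by
      rw [add_sub_right_comm]
      exact norm_sub_le_norm_add (x - o) (t • e)

lemma sq_bearing_add_sub_le {o x e : EuclideanSpace ℝ (Fin 2)}
    (hsign : 0 < (x 0 - o 0) * (x 0 - o 0 + e 0)) {a : ℝ} (ha0 : 0 < a) (ha1 : a < 1) :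
    (bearing o (x + e) - bearing o x) ^ 2
      ≤ ‖e‖ ^ 2 / ‖x - o‖ ^ 2 * (π ^ 2 / a ^ 2 + 1 / (1 - a) ^ 2) := by
  have hx0 : x 0 - o 0 ≠ 0 := left_ne_zero_of_mul hsign.ne'
  have hR : 0 < ‖x - o‖ := by
    refine norm_pos_iff.mpr fun h => hx0 ?_
    simpa using congrArg (· 0) h
  rw [mul_add]
  rcases le_or_gt (a * ‖x - o‖) ‖e‖ with hlarge | hsmall
  · have hA : π ^ 2 ≤ ‖e‖ ^ 2 / ‖x - o‖ ^ 2 * (π ^ 2 / a ^ 2) := by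
      rw [div_mul_div_comm, le_div_iff₀ (by positivity), ← mul_pow]
      nlinarith [pow_le_pow_left₀ (by positivity) hlarge 2, sq_nonneg π]
    have hB : 0 ≤ ‖e‖ ^ 2 / ‖x - o‖ ^ 2 * (1 / (1 - a) ^ 2) := by positivity
    calc _ ≤ π ^ 2 := sq_arctan_sub_arctan_le _ _
      _ ≤ _ := by linarith
  · have hseg : ∀ t ∈ Set.Icc (0 : ℝ) 1,
        (x + t • e) 0 ≠ o 0 ∧ (1 - a) * ‖x - o‖ ≤ ‖x + t • e - o‖ := by
      rintro t ⟨ht0, ht1⟩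
      refine ⟨?_, sub_mul_norm_le_norm_add_smul_sub ht0 ht1 hsmall.le⟩
      have := add_mul_ne_zero_of_mul_add_pos hsign ht0 ht1
      simp only [PiLp.add_apply, PiLp.smul_apply, smul_eq_mul]
      contrapose! this
      linarith
    have hle := abs_bearing_add_sub_le (by nlinarith) hseg
    have hπ : 0 ≤ ‖e‖ ^ 2 / ‖x - o‖ ^ 2 * (π ^ 2 / a ^ 2) := by positivity
    calc _ ≤ (‖e‖ / ((1 - a) * ‖x - o‖)) ^ 2 := by
          rw [← sq_abs]
          exact pow_le_pow_left₀ (abs_nonneg _) hle 2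
      _ = ‖e‖ ^ 2 / ‖x - o‖ ^ 2 * (1 / (1 - a) ^ 2) := by
          field_simp
      _ ≤ _ := by linarith

/-- `a = 1 / (1 + c ^ (-2/3))` is where `a ↦ c ^ 2 / a ^ 2 + 1 / (1 - a) ^ 2` is minimal on `(0, 1)`. -/
lemma sq_div_sq_add_one_div_one_sub_sq_at_optimum {c : ℝ} (hc : 0 < c) :
    c ^ 2 / (1 / (1 + c ^ (-(2 : ℝ) / 3))) ^ 2 + 1 / (1 - 1 / (1 + c ^ (-(2 : ℝ) / 3))) ^ 2
      = c ^ 2 * (1 + c ^ (-(2 : ℝ) / 3)) ^ 3 := by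
  set t := c ^ (-(2 : ℝ) / 3)
  have ht : 0 < t := by positivity
  have ht3 : t ^ 3 * c ^ 2 = 1 := by
    rw [← Real.rpow_natCast t 3, ← Real.rpow_mul hc.le, ← Real.rpow_natCast c 2,
      ← Real.rpow_add hc]
    norm_num
  have h1t : 1 - 1 / (1 + t) = t / (1 + t) := by field_simp; ring
  rw [h1t]
  field_simp
  linear_combination (-1) * ht3

theorem stmt_9_general
    {Ω : Type*} [MeasurableSpace Ω] (P : Measure Ω)
    (o x : EuclideanSpace ℝ (Fin 2))
    (ε : Ω → EuclideanSpace ℝ (Fin 2))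
    (hL2 : Integrable (fun ω => ‖ε ω‖^2) P)
    (hsign : ∀ᵐ ω ∂P, 0 < (x 0 - o 0) * (x 0 - o 0 + ε ω 0)) :
    (∀ a ∈ Set.Ioo (0:ℝ) 1,
      ∫ ω, (Real.arctan (((x + ε ω) 1 - o 1) / ((x + ε ω) 0 - o 0))
              - Real.arctan ((x 1 - o 1) / (x 0 - o 0)))^2 ∂P
        ≤ (∫ ω, ‖ε ω‖^2 ∂P) / ‖x - o‖^2 * (π^2 / a^2 + 1 / (1 - a)^2))
    ∧ ∫ ω, (Real.arctan (((x + ε ω) 1 - o 1) / ((x + ε ω) 0 - o 0))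
              - Real.arctan ((x 1 - o 1) / (x 0 - o 0)))^2 ∂P
        ≤ π^2 * (1 + π ^ (-(2:ℝ)/3))^3 * (∫ ω, ‖ε ω‖^2 ∂P) / ‖x - o‖^2 := by
  have hmain : ∀ a ∈ Set.Ioo (0 : ℝ) 1,
      ∫ ω, (bearing o (x + ε ω) - bearing o x) ^ 2 ∂P
        ≤ (∫ ω, ‖ε ω‖ ^ 2 ∂P) / ‖x - o‖ ^ 2 * (π ^ 2 / a ^ 2 + 1 / (1 - a) ^ 2) := by
    rintro a ⟨ha0, ha1⟩
    rw [← integral_div, ← integral_mul_const]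
    exact integral_mono_of_nonneg (ae_of_all _ fun _ => sq_nonneg _)
      ((hL2.div_const _).mul_const _)
      (hsign.mono fun ω hω => sq_bearing_add_sub_le hω ha0 ha1)
  set t := π ^ (-(2 : ℝ) / 3)
  have ht : 0 < t := by positivity
  have ha : 1 / (1 + t) ∈ Set.Ioo (0 : ℝ) 1 :=
    ⟨by positivity, (div_lt_one (by positivity)).mpr (by linarith)⟩
  refine ⟨hmain, ?_⟩
  calc _ ≤ _ := hmain _ ha
    _ = _ := by rw [sq_div_sq_add_one_div_one_sub_sq_at_optimum pi_pos]; ring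

/-- For the bearing function `Ψ(y) = arctan((y₂ − o₂)/(y₁ − o₁))` seen from `o`,
if `R = ‖x − o‖ > 0`, `x₁ ≠ o₁`, `E‖ε‖² < ∞` and almost surely
`(x₁ − o₁)(x₁ − o₁ + ε₁) > 0`, then for every `a ∈ (0,1)`,
`E{Ψ(x+ε) − Ψ(x)}² ≤ (E‖ε‖²/R²)(π²/a² + 1/(1−a)²)`, and in particular
`E{Ψ(x+ε) − Ψ(x)}² ≤ π²(1 + π^{−2/3})³ E‖ε‖²/R²`. -/
theorem stmt_9
    {Ω : Type*} [MeasurableSpace Ω] (P : Measure Ω) [IsProbabilityMeasure P]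
    (o x : EuclideanSpace ℝ (Fin 2))
    (hR : 0 < ‖x - o‖) (hx1 : x 0 ≠ o 0)
    (ε : Ω → EuclideanSpace ℝ (Fin 2)) (hε : Measurable ε)
    (hL2 : Integrable (fun ω => ‖ε ω‖^2) P)
    (hsign : ∀ᵐ ω ∂P, 0 < (x 0 - o 0) * (x 0 - o 0 + ε ω 0)) :
    (∀ a ∈ Set.Ioo (0:ℝ) 1,
      ∫ ω, (Real.arctan (((x + ε ω) 1 - o 1) / ((x + ε ω) 0 - o 0))
              - Real.arctan ((x 1 - o 1) / (x 0 - o 0)))^2 ∂P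
        ≤ (∫ ω, ‖ε ω‖^2 ∂P) / ‖x - o‖^2 * (π^2 / a^2 + 1 / (1 - a)^2))
    ∧ ∫ ω, (Real.arctan (((x + ε ω) 1 - o 1) / ((x + ε ω) 0 - o 0))
              - Real.arctan ((x 1 - o 1) / (x 0 - o 0)))^2 ∂P
        ≤ π^2 * (1 + π ^ (-(2:ℝ)/3))^3 * (∫ ω, ‖ε ω‖^2 ∂P) / ‖x - o‖^2 :=
  stmt_9_general P o x ε hL2 hsign
end
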